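/- Suppose V is finite-dimensional over k and B is a nondegenerate symmetric contravariant k-bilinear form on V. If U is an A-submodule of V that is maximal (with respect to inclusion) among totally isotropic A-submodules of V, then the quotient A-module U^⊥/U is semisimple. -/

import Mathlib

/-!
Since `B` is contravariant and reflexive, the orthogonal of an `A`-submodule is again an
`A`-submodule. Submodules of `U^⊥/U` are the `W / U` with `U ≤ W ≤ U^⊥`. For such `W`, the
submodule `W ⊓ W^⊥` is totally isotropic and contains `U`, so it equals `U` by maximality; and
nondegeneracy gives `W ⊔ W^⊥ = (W ⊓ W^⊥)^⊥ = U^⊥`. Hence `W^⊥ / U` is a complement of `W / U`.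
-/

open LinearMap (BilinForm)

namespace Submodule

variable {R M : Type*} [Ring R] [AddCommGroup M] [Module R M]

theorem isSemisimpleModule_quotient_comap_subtype {N P : Submodule R M} (hNP : N ≤ P)
    (h : ∀ W, N ≤ W → W ≤ P → ∃ W' ≤ P, W ⊓ W' = N ∧ W ⊔ W' = P) :
    IsSemisimpleModule R (P ⧸ N.comap P.subtype) := by
  rw [isSemisimpleModule_iff, (comapMkQRelIso _).complementedLattice_iff,
    complementedLattice_iff]
  rintro ⟨X, hX⟩
  -- `map P.subtype` identifies the submodules of `P` above `N.comap P.subtype` with `Set.Icc N P`.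
  have hNX : N ≤ X.map P.subtype := fun n hn => ⟨⟨n, hNP hn⟩, hX hn, rfl⟩
  obtain ⟨W', hW'P, hinf, hsup⟩ := h _ hNX (map_subtype_le P X)
  have hmapW' : (W'.comap P.subtype).map P.subtype = W' := by
    rw [map_comap_subtype, inf_eq_right.2 hW'P]
  refine ⟨⟨W'.comap P.subtype, comap_mono (hinf ▸ inf_le_right)⟩, ?_⟩
  rw [Set.Ici.isCompl_iff, codisjoint_iff]
  constructor
  · change X ⊓ W'.comap P.subtype = N.comap P.subtype
    rw [← hinf, comap_inf, comap_map_eq_of_injective P.injective_subtype]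
  · apply map_injective_of_injective P.injective_subtype
    rw [map_sup, hmapW', hsup, map_subtype_top]

end Submodule

namespace LinearMap.BilinForm

section Orthogonal

variable {R M : Type*} [CommRing R] [AddCommGroup M] [Module R M] {B : BilinForm R M}

theorem orthogonal_sup (W X : Submodule R M) :
    B.orthogonal (W ⊔ X) = B.orthogonal W ⊓ B.orthogonal X := by
  refine le_antisymm (le_inf (orthogonal_le le_sup_left) (orthogonal_le le_sup_right)) ?_
  rintro v ⟨hW, hX⟩ y hy
  obtain ⟨w, hw, x, hx, rfl⟩ := Submodule.mem_sup.1 hy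
  rw [map_add, LinearMap.add_apply, hW w hw, hX x hx, add_zero]

variable {K V : Type*} [Field K] [AddCommGroup V] [Module K V] [FiniteDimensional K V]
  {B : BilinForm K V}

theorem orthogonal_inf_orthogonal_self (hB : B.Nondegenerate) (hrefl : B.IsRefl)
    (W : Submodule K V) :
    B.orthogonal (W ⊓ B.orthogonal W) = W ⊔ B.orthogonal W := by
  conv_lhs => rw [← orthogonal_orthogonal hB hrefl W, inf_comm, ← orthogonal_sup]
  rw [orthogonal_orthogonal hB hrefl, orthogonal_orthogonal hB hrefl, sup_comm]

end Orthogonal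

variable {k A V : Type*} [Field k] [Ring A] [Algebra k A] [AddCommGroup V] [Module k V]
  [Module A V] [IsScalarTower k A V] {B : BilinForm k V} {τ : A → A}

def orthogonalSubmodule (hB : ∀ (a : A) (v w : V), B (a • v) w = B v (τ a • w))
    (hrefl : B.IsRefl) (W : Submodule A V) : Submodule A V where
  toAddSubmonoid := (B.orthogonal (W.restrictScalars k)).toAddSubmonoid
  smul_mem' a v hv w hw := hrefl _ _ <| by
    rw [hB]
    exact hrefl _ _ (hv _ (W.smul_mem (τ a) hw))

theorem orthogonalSubmodule_antitone (hB : ∀ (a : A) (v w : V), B (a • v) w = B v (τ a • w))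
    (hrefl : B.IsRefl) {W X : Submodule A V} (h : W ≤ X) :
    B.orthogonalSubmodule hB hrefl X ≤ B.orthogonalSubmodule hB hrefl W :=
  fun _ hv w hw => hv w (h hw)

theorem sup_orthogonalSubmodule_self [FiniteDimensional k V] (hBnd : B.Nondegenerate)
    (hB : ∀ (a : A) (v w : V), B (a • v) w = B v (τ a • w)) (hrefl : B.IsRefl)
    (W : Submodule A V) :
    W ⊔ B.orthogonalSubmodule hB hrefl W =
      B.orthogonalSubmodule hB hrefl (W ⊓ B.orthogonalSubmodule hB hrefl W) := by
  apply Submodule.restrictScalars_injective k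
  rw [Submodule.restrictScalars_sup]
  exact (orthogonal_inf_orthogonal_self hBnd hrefl _).symm

theorem inf_orthogonalSubmodule_eq_of_maximal
    (hB : ∀ (a : A) (v w : V), B (a • v) w = B v (τ a • w)) (hrefl : B.IsRefl)
    {U : Submodule A V} (hUmax : ∀ W : Submodule A V,
      W.restrictScalars k ≤ B.orthogonal (W.restrictScalars k) → U ≤ W → W = U)
    {W : Submodule A V} (hUW : U ≤ W) (hWU : W ≤ B.orthogonalSubmodule hB hrefl U) :
    W ⊓ B.orthogonalSubmodule hB hrefl W = U :=
  hUmax _ (fun _ hv w hw => hv.2 w hw.1) (le_inf hUW fun u hu _ hw => hrefl _ _ (hWU hw u hu))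

end LinearMap.BilinForm

theorem maximal_isotropic_quotient_semisimple_general
    (k A V : Type*) [Field k] [Ring A] [Algebra k A]
    [AddCommGroup V] [Module k V] [Module A V] [IsScalarTower k A V]
    [FiniteDimensional k V]
    (τ : A → A)
    (B : LinearMap.BilinForm k V)
    (hB : ∀ (a : A) (v w : V), B (a • v) w = B v (τ a • w))
    (hBnd : B.Nondegenerate)
    (hBsymm : ∀ v w : V, B v w = B w v)
    (U : Submodule A V)
    (hUiso : U.restrictScalars k ≤ B.orthogonal (U.restrictScalars k))
    (hUmax : ∀ W : Submodule A V,
      W.restrictScalars k ≤ B.orthogonal (W.restrictScalars k) → U ≤ W → W = U) :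
    ∃ Uperp : Submodule A V,
      (Uperp : Set V) = {v : V | ∀ u ∈ U, B u v = 0} ∧
        IsSemisimpleModule A (↥Uperp ⧸ U.comap Uperp.subtype) := by
  have hrefl : B.IsRefl := fun _ _ h => (hBsymm _ _).symm.trans h
  refine ⟨B.orthogonalSubmodule hB hrefl U, rfl, ?_⟩
  refine Submodule.isSemisimpleModule_quotient_comap_subtype hUiso fun W hUW hWU => ?_
  have hinf := LinearMap.BilinForm.inf_orthogonalSubmodule_eq_of_maximal hB hrefl hUmax hUW hWU
  refine ⟨_, LinearMap.BilinForm.orthogonalSubmodule_antitone hB hrefl hUW, hinf, ?_⟩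
  rw [LinearMap.BilinForm.sup_orthogonalSubmodule_self hBnd, hinf]

/-- Let `V` be finite-dimensional over `k` with a nondegenerate symmetric
contravariant `k`-bilinear form `B`.  If `U` is an `A`-submodule of `V` that is maximal
(w.r.t. inclusion) among totally isotropic `A`-submodules of `V`, then `U^⊥` is an
`A`-submodule and the quotient `A`-module `U^⊥/U` is semisimple. -/
theorem maximal_isotropic_quotient_semisimple
    (k A V : Type*) [Field k] [Ring A] [Algebra k A]
    [AddCommGroup V] [Module k V] [Module A V] [IsScalarTower k A V]
    [FiniteDimensional k V]
    (τ : A → A)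
    (hτadd : ∀ a b : A, τ (a + b) = τ a + τ b)
    (hτmul : ∀ a b : A, τ (a * b) = τ b * τ a)
    (hτalg : ∀ c : k, τ (algebraMap k A c) = algebraMap k A c)
    (hτinv : ∀ a : A, τ (τ a) = a)
    (B : LinearMap.BilinForm k V)
    (hB : ∀ (a : A) (v w : V), B (a • v) w = B v (τ a • w))
    (hBnd : B.Nondegenerate)
    (hBsymm : ∀ v w : V, B v w = B w v)
    (U : Submodule A V)
    (hUiso : U.restrictScalars k ≤ B.orthogonal (U.restrictScalars k))
    (hUmax : ∀ W : Submodule A V,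
      W.restrictScalars k ≤ B.orthogonal (W.restrictScalars k) → U ≤ W → W = U) :
    ∃ Uperp : Submodule A V,
      (Uperp : Set V) = {v : V | ∀ u ∈ U, B u v = 0} ∧
        IsSemisimpleModule A (↥Uperp ⧸ U.comap Uperp.subtype) :=
  maximal_isotropic_quotient_semisimple_general k A V τ B hB hBnd hBsymm U hUiso hUmax
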